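/- arXiv:0705.3107 — 3 statements merged into one kernel-verified Lean document; each statement's English description precedes it below -/
import Mathlib

section
/- (Stratification of the Salvetti complex.) With A a real linear arrangement, B a base chamber, ⊴ a linear extension of T_B(A), and C a chamber: the stratum N(C) := {⟨F,C⟩ ∈ S_C | C_F ≠ K_F for all K ⊴ C, K ≠ C} equals {⟨F,C⟩ | F is a face of A with |F| ≥ X_C}, i.e., N(C) is isomorphic as a poset to the face poset of the contracted arrangement A/X_C (equivalently, of the oriented matroid M_A/X_C). -/
/-- The sign of a real number, as an element of `SignType`. -/
noncomputable def sgn (r : ℝ) : SignType := if 0 < r then 1 else if r < 0 then -1 else 0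

/-- An arrangement of `n` linear hyperplanes in `ℝ^d`, given by nonzero linear forms. -/
structure Arrangement (n d : ℕ) where
  f : Fin n → (Fin d → ℝ) →ₗ[ℝ] ℝ
  nz : ∀ i, f i ≠ 0

variable {n d : ℕ}

/-- A chamber of the arrangement, encoded by its sign vector: a vector of nonzero signs
realized by some point of `ℝ^d`. -/
def IsChamber (A : Arrangement n d) (C : Fin n → SignType) : Prop :=
  (∀ i, C i ≠ 0) ∧ ∃ x, ∀ i, sgn (A.f i x) = C i

/-- The set of hyperplanes separating two chambers. -/
def sep (C K : Fin n → SignType) : Finset (Fin n) :=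
  Finset.univ.filter fun i => C i ≠ K i

/-- The type of chambers of `A`. -/
abbrev Chamber (A : Arrangement n d) := {C : Fin n → SignType // IsChamber A C}

/-- The order of the face poset `F(A)`: `F ≤ G` iff the closure of the stratum of `F`
is contained in the closure of the stratum of `G`. -/
def faceLe {n : ℕ} (F G : Fin n → SignType) : Prop := ∀ i, F i ≠ 0 → F i = G i

/-- A face of the arrangement: a realizable sign vector. -/
def IsFace (A : Arrangement n d) (F : Fin n → SignType) : Prop :=
  ∃ x, ∀ i, sgn (A.f i x) = F i

/-- `compOM T F` is the chamber `T_F`: it agrees with `F` where `F` is nonzero and with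
`T` elsewhere. -/
def compOM {n : ℕ} (T F : Fin n → SignType) : Fin n → SignType :=
  fun i => if F i ≠ 0 then F i else T i

/-- A flat of the arrangement, encoded by its support. -/
def IsFlat (A : Arrangement n d) (T : Finset (Fin n)) : Prop :=
  ∀ j, (∀ x, (∀ i ∈ T, A.f i x = 0) → A.f j x = 0) → j ∈ T

/-- `J(C)` for a linear order `L` on the chambers. -/
def Jset (A : Arrangement n d) (L : LinearOrder (Chamber A)) (C : Chamber A) :
    Set (Finset (Fin n)) :=
  {T | IsFlat A T ∧ ∀ K : Chamber A, L.lt K C → ∃ i ∈ T, C.1 i ≠ K.1 i}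


lemma sgn_eq_zero_iff (r : ℝ) : sgn r = 0 ↔ r = 0 := by
  unfold sgn
  rcases lt_trichotomy r 0 with h|h|h
  · simp [not_lt.mpr h.le, h, h.ne]
  · simp [h]
  · simp [h, not_lt.mpr h.le, h.ne']

/-- Stratification of the Salvetti complex: for a chamber `C` with associated flat
`X_C = min J(C)`, the stratum `N(C) = {⟨F,C⟩ ∈ S_C ∣ C_F ≠ K_F for all K before C}`
consists exactly of the pairs `⟨F,C⟩` with `F ≤ C` a face whose span `|F|` lies above
`X_C` (i.e. every hyperplane of `supp X_C` contains `F`); thus `N(C)` is the face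
poset of the contraction `A/X_C`. -/
theorem stratum_is_contraction (A : Arrangement n d) (B : Chamber A)
    (L : LinearOrder (Chamber A))
    (hL : ∀ C K : Chamber A, sep B.1 C.1 ⊂ sep B.1 K.1 → L.lt C K)
    (C : Chamber A) (T₀ : Finset (Fin n))
    (hmem : T₀ ∈ Jset A L C) (hmin : ∀ T ∈ Jset A L C, T₀ ⊆ T) :
    ∀ F, IsFace A F → faceLe F C.1 →
      ((∀ K : Chamber A, L.lt K C → compOM C.1 F ≠ compOM K.1 F) ↔
        ∀ i ∈ T₀, F i = 0) := by
  intro F hF hFC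
  obtain ⟨x₀, hx₀⟩ := hF
  constructor
  · intro h i hiT
    set Z : Finset (Fin n) := Finset.univ.filter (fun i => F i = 0) with hZ
    have hZflat : IsFlat A Z := by
      intro j hj
      have hz : ∀ k ∈ Z, A.f k x₀ = 0 := by
        intro k hk
        simp only [hZ, Finset.mem_filter] at hk
        have := hx₀ k
        rw [hk.2] at this
        exact (sgn_eq_zero_iff _).1 this
      have hj0 := hj x₀ hz
      simp only [hZ, Finset.mem_filter, Finset.mem_univ, true_and]
      rw [← hx₀ j]
      exact (sgn_eq_zero_iff _).2 hj0
    have hJ : Z ∈ Jset A L C := by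
      refine ⟨hZflat, fun K hK => ?_⟩
      have hne := h K hK
      have hex : ∃ i, compOM C.1 F i ≠ compOM K.1 F i := by
        by_contra hc
        push_neg at hc
        exact hne (funext hc)
      obtain ⟨i, hi⟩ := hex
      simp only [compOM] at hi
      by_cases h0 : F i = 0
      · refine ⟨i, ?_, ?_⟩
        · simp [hZ, h0]
        · simpa [h0] using hi
      · simp [h0] at hi
    have hsub := hmin Z hJ
    have := hsub hiT
    simpa [hZ] using this
  · intro h K hK heq
    obtain ⟨i, hiT, hCK⟩ := hmem.2 K hK
    have hFi := h i hiT
    have := congrFun heq i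
    simp only [compOM, hFi] at this
    exact hCK (by simpa using this)
end

section
/- Every subset N(C,K) := {⟨F,C⟩ ∈ S_C | C_F ≠ K_F} is an upper ideal (up-set) of the poset S_C, and hence so is N(C) = ⋂_{K ⊴ C, K≠C} N(C,K). -/
variable {n d : ℕ}

/-- The order of the Salvetti poset on pairs `(F,T)`:
`⟨F,T⟩ ≤ ⟨F',T'⟩` iff `F ≥ F'` in the face poset and `T = T'_F`. -/
def SalLe {n : ℕ} (p q : ((Fin n → SignType) × (Fin n → SignType))) : Prop :=
  faceLe q.1 p.1 ∧ p.2 = compOM q.2 p.1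

/-- The lower ideal `S_C` of the Salvetti poset below `⟨P,C⟩` (with `P` the minimal
face): the pairs `⟨F, C_F⟩` with `F` a face. -/
def SalC (A : Arrangement n d) (C : Chamber A) :
    Set ((Fin n → SignType) × (Fin n → SignType)) :=
  {p | IsFace A p.1 ∧ p.2 = compOM C.1 p.1}

/-- `N(C,K) = {⟨F,C_F⟩ ∈ S_C ∣ C_F ≠ K_F}`. -/
def Nck (A : Arrangement n d) (C K : Chamber A) :
    Set ((Fin n → SignType) × (Fin n → SignType)) :=
  {p ∈ SalC A C | compOM C.1 p.1 ≠ compOM K.1 p.1}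

lemma key {n : ℕ} {C K F G : Fin n → SignType} (h : faceLe G F)
    (hq : compOM C G = compOM K G) : compOM C F = compOM K F := by
  funext i
  by_cases hF : F i = 0
  · have hG : G i = 0 := by
      by_contra hG
      exact hG (hF ▸ h i hG)
    have := congrFun hq i
    simpa [compOM, hG, hF] using this
  · simp [compOM, hF]

/-- Every `N(C,K)` is an upper ideal (up-set) of `S_C`, and hence so is
`N(C) = ⋂_{K ⊲ C} N(C,K)`. -/
theorem Nck_upperIdeal (A : Arrangement n d) (C : Chamber A) :
    (∀ K : Chamber A, ∀ p ∈ Nck A C K, ∀ q ∈ SalC A C, SalLe p q → q ∈ Nck A C K) ∧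
    (∀ L : LinearOrder (Chamber A), ∀ p ∈ SalC A C,
      (∀ K : Chamber A, L.lt K C → p ∈ Nck A C K) →
      ∀ q ∈ SalC A C, SalLe p q → ∀ K : Chamber A, L.lt K C → q ∈ Nck A C K) := by
  have main : ∀ K : Chamber A, ∀ p ∈ Nck A C K, ∀ q ∈ SalC A C, SalLe p q → q ∈ Nck A C K := by
    intro K p hp q hq hle
    refine ⟨hq, fun h => hp.2 (key hle.1 h)⟩
  exact ⟨main, fun L p hp hN q hq hle K hK => main K p (hN K hK) q hq hle⟩
end

section
/- (Jewell–Orlik bijection.) Let A be a real linear arrangement ordered so as to satisfy the cut property with respect to the base chamber B. Then the recursively defined map η is a bijection from the set of chambers T(A) to the set nbc(A) of no-broken-circuit sets of A, with η(B) = ∅. -/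
open scoped Classical

/-- An arrangement of linear hyperplanes in a real vector space `V`, with linearly
ordered ground set a finite set `E` of natural numbers: hyperplane `H_i = ker (f i)`
for `i ∈ E`. -/
structure NArr (V : Type) [AddCommGroup V] [Module ℝ V] where
  E : Finset ℕ
  f : ℕ → V →ₗ[ℝ] ℝ
  nz : ∀ i ∈ E, f i ≠ 0

variable {V : Type} [AddCommGroup V] [Module ℝ V]

/-- A chamber of `A`, encoded by its sign vector (supported on the ground set). -/
def NArr.IsChamber (A : NArr V) (C : ℕ → SignType) : Prop :=
  (∀ i ∈ A.E, C i ≠ 0) ∧ (∀ i ∉ A.E, C i = 0) ∧ ∃ x, ∀ i ∈ A.E, sgn (A.f i x) = C i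

/-- The largest (= last) hyperplane of `A`. -/
noncomputable def NArr.last (A : NArr V) : ℕ := A.E.sup id

/-- The deletion `A' = A ∖ {H_n}` of the last hyperplane. -/
noncomputable def NArr.delete (A : NArr V) : NArr V :=
  ⟨A.E.erase A.last, A.f, fun i hi => A.nz i (Finset.mem_of_mem_erase hi)⟩

/-- The ground set of the restriction `A'' = {H ∩ H_n | H ∈ A'}`: each flat `H ∩ H_n`
is labeled by the smallest hyperplane of `A` containing it. -/
noncomputable def NArr.resE (A : NArr V) : Finset ℕ :=
  (A.E.erase A.last).filter fun i =>
    (A.f i).domRestrict (LinearMap.ker (A.f A.last)) ≠ 0 ∧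
    ∀ j ∈ A.E.erase A.last,
      LinearMap.ker (A.f j) ⊓ LinearMap.ker (A.f A.last) =
        LinearMap.ker (A.f i) ⊓ LinearMap.ker (A.f A.last) → i ≤ j

/-- The restriction `A''` of `A` to its last hyperplane, with the induced ordering. -/
noncomputable def NArr.restrict (A : NArr V) : NArr ↥(LinearMap.ker (A.f A.last)) :=
  ⟨A.resE, fun i => (A.f i).domRestrict (LinearMap.ker (A.f A.last)),
   fun i hi => (Finset.mem_filter.mp hi).2.1⟩

/-- Restriction of a sign vector to a subset of the ground set. -/
def restrictSigns (S : Finset ℕ) (C : ℕ → SignType) : ℕ → SignType :=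
  fun i => if i ∈ S then C i else 0

/-- `C ∈ B↑`: the chamber `C` lies on the non-`B` side of the last hyperplane `H_n` and
the chamber of the deletion `A'` containing it is cut by `H_n`. -/
def NArr.upperCond (A : NArr V) (B C : ℕ → SignType) : Prop :=
  C A.last ≠ B A.last ∧
    ∃ x, A.f A.last x = 0 ∧ ∀ i ∈ A.E.erase A.last, sgn (A.f i x) = C i

/-- The Jewell–Orlik recursion: `IsJO V A B η` holds iff `η` is obtained by the recursive
deletion–restriction definition of the map of Jewell and Orlik for the arrangement `A`
with base chamber `B`:  `η(C) = η'(C')` if `C ∈ U ∪ B↓`, and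
`η(C) = {H_n} ∪ η''(C ∩ H_n)` (labels taken in `A`) if `C ∈ B↑`. -/
inductive IsJO :
    ∀ (V : Type) [AddCommGroup V] [Module ℝ V],
      NArr V → (ℕ → SignType) → ((ℕ → SignType) → Finset ℕ) → Prop
  | base {V : Type} [AddCommGroup V] [Module ℝ V] (A : NArr V) (B : ℕ → SignType)
      (η : (ℕ → SignType) → Finset ℕ) :
      A.E = ∅ → (∀ C, η C = ∅) → IsJO V A B η
  | step {V : Type} [AddCommGroup V] [Module ℝ V] (A : NArr V) (B : ℕ → SignType)
      (η η' : (ℕ → SignType) → Finset ℕ) (η'' : (ℕ → SignType) → Finset ℕ) :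
      A.E.Nonempty →
      IsJO V A.delete (restrictSigns (A.E.erase A.last) B) η' →
      IsJO ↥(LinearMap.ker (A.f A.last)) A.restrict (restrictSigns A.resE B) η'' →
      (∀ C, A.IsChamber C → ¬ A.upperCond B C →
        η C = η' (restrictSigns (A.E.erase A.last) C)) →
      (∀ C, A.IsChamber C → A.upperCond B C →
        η C = insert A.last (η'' (restrictSigns A.resE C))) →
      IsJO V A B η

/-- Independent sets of the underlying matroid. -/
def NArr.Indep (A : NArr V) (S : Finset ℕ) : Prop :=
  S ⊆ A.E ∧ LinearIndependent ℝ (fun i : S => A.f i.1)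

/-- Circuits: minimal dependent subsets. -/
def NArr.IsCircuit (A : NArr V) (S : Finset ℕ) : Prop :=
  S ⊆ A.E ∧ ¬ A.Indep S ∧ ∀ T ⊂ S, A.Indep T

/-- Broken circuits: circuits with their smallest element removed. -/
def NArr.IsBroken (A : NArr V) (S : Finset ℕ) : Prop :=
  ∃ T, A.IsCircuit T ∧ ∃ h : T.Nonempty, S = T.erase (T.min' h)

/-- The no-broken-circuit sets of `A`. -/
def NArr.nbc (A : NArr V) : Set (Finset ℕ) :=
  {S | A.Indep S ∧ ∀ T, A.IsBroken T → ¬ T ⊆ S}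

/-- The real value of a sign. -/
def signVal : SignType → ℝ
  | SignType.zero => 0
  | SignType.neg => -1
  | SignType.pos => 1

/-- The ordering of the hyperplanes of `A` satisfies the cut property with respect to
`B` : every hyperplane which is not the first one meets the interior of the base
chamber of the preceding ones. -/
def NArr.CutProp (A : NArr V) (B : ℕ → SignType) : Prop :=
  ∀ j ∈ A.E, (∃ i ∈ A.E, i < j) →
    ∃ x, A.f j x = 0 ∧ ∀ i ∈ A.E, i < j → 0 < signVal (B i) * A.f i x

/-- The flat spanned by a set of hyperplanes. -/
noncomputable def NArr.flatOf (A : NArr V) (S : Finset ℕ) : Submodule ℝ V :=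
  ⨅ i ∈ S, LinearMap.ker (A.f i)

/-!
Induction along the deletion–restriction recursion defining `η`, with `H_n` the last hyperplane.
Forgetting `H_n` identifies the chambers of `A` outside `B↑` with the chambers of `A'` (of a
chamber of `A'` cut by `H_n` only the half on the side of `B` is kept), and intersecting with
`H_n` identifies the chambers in `B↑` with the chambers of `A''`. Dually, the nbc sets of `A`
avoiding `H_n` are exactly those of `A'`, and `S ↦ S ∖ {H_n}` identifies the nbc sets containing
`H_n` with those of `A''`: a linear relation restricts to `H_n`, and one on `H_n` lifts with an
extra `H_n`-term, so broken circuits correspond once each hyperplane is replaced by the smallest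
one with the same trace on `H_n`. (If another hyperplane coincides with `H_n`, both `B↑` and the
nbc sets containing `H_n` are empty.) The two pieces glue to a bijection, and `η(B) = η'(B')`.
-/

lemma sgn_eq_sign (r : ℝ) : sgn r = SignType.sign r := by
  rw [sgn, sign_apply]

lemma SignType.eq_of_ne_of_ne {s t u : SignType} (hs : s ≠ 0) (ht : t ≠ 0) (hu : u ≠ 0)
    (hsu : s ≠ u) (htu : t ≠ u) : s = t := by
  cases s <;> cases t <;> cases u <;> simp_all

lemma SignType.mul_eq_neg_one_of_ne {s t : SignType} (hs : s ≠ 0) (ht : t ≠ 0) (hst : s ≠ t) :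
    s * t = -1 := by
  cases s <;> cases t <;> simp_all

lemma SignType.neg_ne_self {s : SignType} (hs : s ≠ 0) : -s ≠ s := by
  cases s <;> simp_all

section OrderedField

variable {K M : Type*} [Field K] [LinearOrder K] [IsStrictOrderedRing K]
  [AddCommGroup M] [Module K M]

lemma sign_mul_add_mul {a b p q : K} (ha : 0 < a) (hb : 0 < b)
    (h : SignType.sign p = SignType.sign q) : SignType.sign (a * p + b * q) = SignType.sign p := by
  rcases lt_trichotomy p 0 with hp | rfl | hp
  · have hq := sign_eq_neg_one_iff.mp (h ▸ sign_neg hp)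
    rw [sign_neg hp, sign_eq_neg_one_iff]
    nlinarith
  · rw [sign_zero] at h
    simp [sign_eq_zero_iff.mp h.symm]
  · have hq := sign_eq_one_iff.mp (h ▸ sign_pos hp)
    rw [sign_pos hp, sign_eq_one_iff]
    nlinarith

lemma exists_sign_eq {g : M →ₗ[K] K} (hg : g ≠ 0) {s : SignType} (hs : s ≠ 0) :
    ∃ v, SignType.sign (g v) = s := by
  obtain ⟨w, hw⟩ : ∃ w, g w ≠ 0 := by
    by_contra! h
    exact hg (LinearMap.ext h)
  have hsw := sign_ne_zero.mpr hw
  rcases (by generalize SignType.sign (g w) = t at *; cases s <;> cases t <;> simp_all :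
      SignType.sign (g w) = s ∨ -SignType.sign (g w) = s) with h | h
  · exact ⟨w, h⟩
  · exact ⟨-w, by rw [map_neg, Left.sign_neg, h]⟩

lemma exists_wall_point (g : M →ₗ[K] K) {x₁ x₂ : M} (h : g x₁ * g x₂ < 0) :
    ∃ x, g x = 0 ∧ ∀ φ : M →ₗ[K] K, SignType.sign (φ x₁) = SignType.sign (φ x₂) →
      SignType.sign (φ x) = SignType.sign (φ x₁) := by
  refine ⟨|g x₂| • x₁ + |g x₁| • x₂, ?_, fun φ hφ => ?_⟩
  · rcases mul_neg_iff.mp h with ⟨h₁, h₂⟩ | ⟨h₁, h₂⟩ <;>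
      simp [abs_of_pos, abs_of_neg, h₁, h₂] <;> ring
  · have ⟨h₁, h₂⟩ : g x₁ ≠ 0 ∧ g x₂ ≠ 0 := by
      constructor <;> rintro h0 <;> simp [h0] at h
    simpa using sign_mul_add_mul (abs_pos.mpr h₂) (abs_pos.mpr h₁) hφ

end OrderedField

open Filter Topology in
lemma exists_pos_sign_add_smul_eq {M ι : Type*} [AddCommGroup M] [Module ℝ M] (s : Finset ι)
    (f : ι → M →ₗ[ℝ] ℝ) {x : M} (hx : ∀ i ∈ s, f i x ≠ 0) (v : M) :
    ∃ δ : ℝ, 0 < δ ∧ ∀ i ∈ s, SignType.sign (f i (x + δ • v)) = SignType.sign (f i x) := by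
  have hloc : ∀ i ∈ s, ∀ᶠ δ in 𝓝 (0 : ℝ),
      SignType.sign (f i (x + δ • v)) = SignType.sign (f i x) := by
    intro i hi
    have hcont : ContinuousAt (fun δ : ℝ => SignType.sign (f i x + δ * f i v)) 0 :=
      (continuousAt_sign_of_ne_zero (by simpa using hx i hi)).comp (by fun_prop)
    rw [ContinuousAt, nhds_discrete SignType, tendsto_pure] at hcont
    simpa using hcont
  obtain ⟨δ, hδ, hpos⟩ := (((eventually_all_finset s).mpr hloc).filter_mono
    nhdsWithin_le_nhds |>.and (self_mem_nhdsWithin (s := Set.Ioi 0))).exists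
  exact ⟨δ, hpos, hδ⟩

section Dual

open LinearMap

variable {K M : Type*} [Field K] [AddCommGroup M] [Module K M]

lemma LinearMap.exists_smul_eq_of_ker_le {g φ : M →ₗ[K] K} (h : ker g ≤ ker φ) :
    ∃ c : K, c • g = φ := by
  have := mem_span_of_iInf_ker_le_ker (L := fun _ : Unit => g) (by simpa using h)
  rwa [Set.range_const, Submodule.mem_span_singleton] at this

lemma LinearMap.domRestrict_ker_eq_zero_iff {g φ : M →ₗ[K] K} :
    φ.domRestrict (ker g) = 0 ↔ ∃ c : K, c • g = φ := by
  refine ⟨fun h => exists_smul_eq_of_ker_le fun x hx => ?_, ?_⟩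
  · simpa using congr($h ⟨x, hx⟩)
  · rintro ⟨c, rfl⟩
    ext ⟨x, hx⟩
    simp [mem_ker.mp hx]

end Dual

lemma Set.BijOn.union_of_disjoint {α β : Type*} {f : α → β} {s₁ s₂ : Set α} {t₁ t₂ : Set β}
    (h₁ : Set.BijOn f s₁ t₁) (h₂ : Set.BijOn f s₂ t₂) (ht : Disjoint t₁ t₂) :
    Set.BijOn f (s₁ ∪ s₂) (t₁ ∪ t₂) := by
  refine h₁.union h₂ ?_
  rintro x (hx | hx) y (hy | hy) hxy
  · exact h₁.injOn hx hy hxy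
  · exact (Set.disjoint_left.mp ht (h₁.mapsTo hx) (hxy ▸ h₂.mapsTo hy)).elim
  · exact (Set.disjoint_left.mp ht (h₁.mapsTo hy) (hxy ▸ h₂.mapsTo hx)).elim
  · exact h₂.injOn hx hy hxy

lemma restrictSigns_of_mem {S : Finset ℕ} {C : ℕ → SignType} {i : ℕ} (hi : i ∈ S) :
    restrictSigns S C i = C i := if_pos hi

lemma restrictSigns_of_notMem {S : Finset ℕ} {C : ℕ → SignType} {i : ℕ} (hi : i ∉ S) :
    restrictSigns S C i = 0 := if_neg hi

lemma restrictSigns_eq_restrictSigns_iff {S : Finset ℕ} {C D : ℕ → SignType} :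
    restrictSigns S C = restrictSigns S D ↔ ∀ i ∈ S, C i = D i := by
  refine ⟨fun h i hi => ?_, fun h => funext fun i => ?_⟩
  · simpa [restrictSigns_of_mem hi] using congrFun h i
  · by_cases hi : i ∈ S
    · simp [restrictSigns_of_mem hi, h i hi]
    · simp [restrictSigns_of_notMem hi]

lemma restrictSigns_eq_self {S : Finset ℕ} {C : ℕ → SignType} (hC : ∀ i ∉ S, C i = 0) :
    restrictSigns S C = C :=
  funext fun i => by by_cases hi : i ∈ S <;> simp [restrictSigns, hi, hC]

namespace NArr

variable {A : NArr V} {B : ℕ → SignType}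

section

variable (A)

lemma last_mem (hne : A.E.Nonempty) : A.last ∈ A.E := by
  obtain ⟨i, hi, he⟩ := A.E.exists_mem_eq_sup hne id
  rwa [NArr.last, he]

lemma le_last {i : ℕ} (hi : i ∈ A.E) : i ≤ A.last :=
  Finset.le_sup (f := id) hi

lemma last_notMem_resE : A.last ∉ A.resE := fun h =>
  (Finset.mem_erase.mp (Finset.mem_filter.mp h).1).1 rfl

lemma resE_subset : A.resE ⊆ A.E.erase A.last := Finset.filter_subset _ _

@[simp] lemma restrict_f_apply (i : ℕ) (x : LinearMap.ker (A.f A.last)) :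
    A.restrict.f i x = A.f i x := rfl

lemma restrict_f_eq_zero_iff {i : ℕ} : A.restrict.f i = 0 ↔ ∃ c : ℝ, c • A.f A.last = A.f i :=
  LinearMap.domRestrict_ker_eq_zero_iff

lemma sum_smul_restrict_f_eq_zero_iff {T : Finset ℕ} {a : ℕ → ℝ} :
    ∑ i ∈ T, a i • A.restrict.f i = 0 ↔ ∃ b : ℝ, b • A.f A.last = ∑ i ∈ T, a i • A.f i := by
  rw [← LinearMap.domRestrict_ker_eq_zero_iff]
  constructor <;> intro h <;> ext x <;> simpa [LinearMap.sum_apply] using congr($h x)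

lemma exists_smul_restrict_f_eq {i k : ℕ}
    (hik : LinearMap.ker (A.f k) ⊓ LinearMap.ker (A.f A.last) =
      LinearMap.ker (A.f i) ⊓ LinearMap.ker (A.f A.last)) :
    ∃ c : ℝ, c • A.restrict.f k = A.restrict.f i := by
  refine LinearMap.exists_smul_eq_of_ker_le fun x hx => ?_
  have : (x : V) ∈ LinearMap.ker (A.f k) ⊓ LinearMap.ker (A.f A.last) := ⟨hx, x.2⟩
  rw [hik] at this
  exact this.1

lemma exists_label {i : ℕ} (hi : i ∈ A.E.erase A.last) (h0 : A.restrict.f i ≠ 0) :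
    ∃ k ∈ A.resE, k ≤ i ∧ ∃ c : ℝ, c ≠ 0 ∧ c • A.restrict.f k = A.restrict.f i := by
  let L := fun j => LinearMap.ker (A.f j) ⊓ LinearMap.ker (A.f A.last)
  let T := (A.E.erase A.last).filter fun j => L j = L i
  have hT : T.Nonempty := ⟨i, Finset.mem_filter.mpr ⟨hi, rfl⟩⟩
  obtain ⟨hkE, hkL⟩ := Finset.mem_filter.mp (T.min'_mem hT)
  obtain ⟨c, hc⟩ := A.exists_smul_restrict_f_eq hkL
  have hc0 : c ≠ 0 := by rintro rfl; exact h0 (by rw [← hc, zero_smul])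
  have hk0 : A.restrict.f (T.min' hT) ≠ 0 := by rintro h; exact h0 (by rw [← hc, h, smul_zero])
  refine ⟨T.min' hT, Finset.mem_filter.mpr ⟨hkE, hk0, fun j hj hjL => ?_⟩,
    T.min'_le i (Finset.mem_filter.mpr ⟨hi, rfl⟩), c, hc0, hc⟩
  exact T.min'_le j (Finset.mem_filter.mpr ⟨hj, hjL.trans hkL⟩)

lemma indep_empty : A.Indep ∅ :=
  ⟨Finset.empty_subset _, by simp⟩

end

lemma Indep.linearIndepOn {S : Finset ℕ} (hS : A.Indep S) : LinearIndepOn ℝ A.f (S : Set ℕ) :=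
  hS.2

lemma Indep.eq_zero_of_sum_eq_zero {T : Finset ℕ} (hT : A.Indep T) {a : ℕ → ℝ}
    (h : ∑ i ∈ T, a i • A.f i = 0) : ∀ i ∈ T, a i = 0 :=
  linearIndepOn_finset_iff.mp hT.2 a h

lemma indep_of_subset_of_forall_sum_eq_zero {T : Finset ℕ} (hT : T ⊆ A.E)
    (h : ∀ a : ℕ → ℝ, ∑ i ∈ T, a i • A.f i = 0 → ∀ i ∈ T, a i = 0) : A.Indep T :=
  ⟨hT, linearIndepOn_finset_iff.mpr h⟩

lemma exists_isCircuit_subset {T : Finset ℕ} (hTE : T ⊆ A.E) (hT : ¬ A.Indep T) :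
    ∃ C ⊆ T, A.IsCircuit C := by
  obtain ⟨C, hCmem, hCmin⟩ :=
    (T.powerset.filter fun U => ¬ A.Indep U).exists_minimal ⟨T, by simp [hT]⟩
  simp only [Finset.mem_filter, Finset.mem_powerset] at hCmem hCmin
  refine ⟨C, hCmem.1, hCmem.1.trans hTE, hCmem.2, fun U hUC => ?_⟩
  by_contra hU
  exact hUC.2 (hCmin ⟨hUC.1.trans hCmem.1, hU⟩ hUC.1)

lemma IsCircuit.nonempty {C : Finset ℕ} (hC : A.IsCircuit C) : C.Nonempty :=
  Finset.nonempty_iff_ne_empty.mpr fun h => hC.2.1 (h ▸ A.indep_empty)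

lemma IsCircuit.exists_sum_eq_zero {C : Finset ℕ} (hC : A.IsCircuit C) {m : ℕ} (hm : m ∈ C) :
    ∃ a : ℕ → ℝ, ∑ i ∈ C, a i • A.f i = 0 ∧ a m ≠ 0 := by
  have hdep : ¬ ∀ a : ℕ → ℝ, ∑ i ∈ C, a i • A.f i = 0 → ∀ i ∈ C, a i = 0 :=
    fun h => hC.2.1 (indep_of_subset_of_forall_sum_eq_zero hC.1 h)
  push Not at hdep
  obtain ⟨a, hsum, j, hj, haj⟩ := hdep
  refine ⟨a, hsum, fun ham => haj ?_⟩
  have hsub := hC.2.2 _ (Finset.erase_ssubset hm)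
  refine hsub.eq_zero_of_sum_eq_zero ?_ j (Finset.mem_erase.mpr ⟨?_, hj⟩)
  · rwa [Finset.sum_erase _ (by rw [ham, zero_smul])]
  · rintro rfl; exact haj ham

/-- A circuit inside `T` would have its broken circuit inside `S`. -/
lemma indep_of_subset_insert_of_mem_nbc {S T : Finset ℕ} {j : ℕ} (hS : S ∈ A.nbc)
    (hTE : T ⊆ A.E) (hTS : T ⊆ insert j S) (hj : ∀ x ∈ T, j ≤ x) : A.Indep T := by
  by_contra hT
  obtain ⟨C, hCT, hC⟩ := exists_isCircuit_subset hTE hT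
  refine hS.2 _ ⟨C, hC, hC.nonempty, rfl⟩ fun x hx => ?_
  obtain ⟨hxm, hxC⟩ := Finset.mem_erase.mp hx
  refine (Finset.mem_insert.mp (hTS (hCT hxC))).resolve_left ?_
  rintro rfl
  exact hxm (le_antisymm (hj _ (hCT (C.min'_mem _))) (C.min'_le _ hxC))

lemma delete_indep_iff {S : Finset ℕ} : A.delete.Indep S ↔ A.Indep S ∧ A.last ∉ S := by
  simp only [Indep, delete, Finset.subset_erase]
  tauto

lemma delete_isCircuit_iff {C : Finset ℕ} :
    A.delete.IsCircuit C ↔ A.IsCircuit C ∧ A.last ∉ C := by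
  simp only [IsCircuit, delete_indep_iff]
  refine ⟨fun ⟨hCE, hC, hmin⟩ => ?_, fun ⟨⟨hCE, hC, hmin⟩, hn⟩ => ?_⟩
  · have hn : A.last ∉ C := (Finset.subset_erase.mp hCE).2
    exact ⟨⟨(Finset.subset_erase.mp hCE).1, fun h => hC ⟨h, hn⟩, fun T hT => (hmin T hT).1⟩, hn⟩
  · exact ⟨Finset.subset_erase.mpr ⟨hCE, hn⟩, fun h => hC h.1,
      fun T hT => ⟨hmin T hT, fun h => hn (hT.1 h)⟩⟩

lemma IsCircuit.min'_ne_last {C : Finset ℕ} (hC : A.IsCircuit C) (hne : C.Nonempty) :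
    C.min' hne ≠ A.last := by
  intro h
  have hCn : C = {A.last} := Finset.eq_singleton_iff_unique_mem.mpr
    ⟨h ▸ C.min'_mem hne, fun x hx => le_antisymm (A.le_last (hC.1 hx)) (h ▸ C.min'_le x hx)⟩
  refine hC.2.1 ⟨hC.1, (?_ : LinearIndepOn ℝ A.f (C : Set ℕ))⟩
  rw [hCn, Finset.coe_singleton, linearIndepOn_singleton_iff]
  exact A.nz _ (hC.1 (hCn ▸ Finset.mem_singleton_self _))

lemma nbc_delete : A.delete.nbc = {S | S ∈ A.nbc ∧ A.last ∉ S} := by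
  ext S
  simp only [nbc, Set.mem_ofPred_eq, delete_indep_iff]
  refine ⟨fun ⟨⟨hS, hn⟩, hbc⟩ => ⟨⟨hS, fun T ⟨C, hC, hCne, hT⟩ hTS => ?_⟩, hn⟩,
    fun ⟨⟨hS, hbc⟩, hn⟩ => ⟨⟨hS, hn⟩, fun T ⟨C, hC, hCne, hT⟩ =>
      hbc T ⟨C, (delete_isCircuit_iff.mp hC).1, hCne, hT⟩⟩⟩
  by_cases hnC : A.last ∈ C
  · exact hn (hTS (hT ▸ Finset.mem_erase.mpr ⟨(hC.min'_ne_last hCne).symm, hnC⟩))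
  · exact hbc T ⟨C, delete_isCircuit_iff.mpr ⟨hC, hnC⟩, hCne, hT⟩ hTS

/-- A hyperplane `H_i = H_n` with `i < n` makes `{H_n}` a broken circuit. -/
lemma last_notMem_of_mem_nbc {i : ℕ} (hi : i ∈ A.E.erase A.last) (h0 : A.restrict.f i = 0)
    {S : Finset ℕ} (hS : S ∈ A.nbc) : A.last ∉ S := by
  intro hn
  obtain ⟨c, hc⟩ := A.restrict_f_eq_zero_iff.mp h0
  have hind := A.indep_of_subset_insert_of_mem_nbc (T := {A.last, i}) (j := i) hS
    (by simp [Finset.insert_subset_iff, hS.1.1 hn, Finset.mem_of_mem_erase hi])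
    (Finset.insert_subset (Finset.mem_insert_of_mem hn) (by simp))
    (by simpa using A.le_last (Finset.mem_of_mem_erase hi))
  have := hind.linearIndepOn
  rw [Finset.coe_pair, linearIndepOn_pair_iff _ (Finset.ne_of_mem_erase hi).symm
    (A.nz _ (hS.1.1 hn))] at this
  exact this c hc

lemma erase_last_subset_resE_of_mem_nbc {S : Finset ℕ} (hS : S ∈ A.nbc) (hn : A.last ∈ S) :
    S.erase A.last ⊆ A.resE := by
  intro i hi
  have hiS := Finset.mem_of_mem_erase hi
  have hi' : i ∈ A.E.erase A.last :=
    Finset.mem_erase.mpr ⟨Finset.ne_of_mem_erase hi, hS.1.1 hiS⟩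
  refine Finset.mem_filter.mpr ⟨hi', fun h0 => last_notMem_of_mem_nbc hi' h0 hS hn,
    fun j hj hji => ?_⟩
  -- otherwise `{j, i, H_n}` is dependent, with minimum `j`
  by_contra! hlt
  obtain ⟨c, hc⟩ := A.exists_smul_restrict_f_eq hji
  obtain ⟨b, hb⟩ : ∃ b : ℝ, b • A.f A.last = A.f i - c • A.f j := by
    refine LinearMap.domRestrict_ker_eq_zero_iff.mp (LinearMap.ext fun x => ?_)
    have := congr($hc x)
    simp only [LinearMap.smul_apply, restrict_f_apply, smul_eq_mul] at this
    simp [← this]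
  have hind := A.indep_of_subset_insert_of_mem_nbc (T := {i, j, A.last}) (j := j) hS
    (by simp [Finset.insert_subset_iff, hS.1.1 hiS, Finset.mem_of_mem_erase hj, hS.1.1 hn])
    (by simp [Finset.insert_subset_iff, hiS, hn])
    (by simpa [hlt.le] using A.le_last (Finset.mem_of_mem_erase hj))
  have := hind.linearIndepOn
  rw [Finset.coe_insert, Finset.coe_pair, linearIndepOn_insert (by
    simp [hlt.ne', Finset.ne_of_mem_erase hi']), Set.image_pair] at this
  exact this.2 (Submodule.mem_span_pair.mpr ⟨c, b, by rw [hb]; abel⟩)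

lemma exists_sum_insert_last_eq_zero {T : Finset ℕ} (hT : A.last ∉ T) {a : ℕ → ℝ}
    (h : ∑ i ∈ T, a i • A.restrict.f i = 0) :
    ∃ b : ℝ, ∑ i ∈ insert A.last T, Function.update a A.last b i • A.f i = 0 := by
  obtain ⟨b, hb⟩ := A.sum_smul_restrict_f_eq_zero_iff.mp h
  refine ⟨-b, ?_⟩
  rw [Finset.sum_insert hT, Function.update_self, neg_smul (M := V →ₗ[ℝ] ℝ), hb, neg_add_eq_zero]
  exact Finset.sum_congr rfl fun i hi => by
    rw [Function.update_of_ne (ne_of_mem_of_not_mem hi hT)]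

lemma indep_insert_last_iff (hne : A.E.Nonempty) {S : Finset ℕ} (hS : S ⊆ A.resE) :
    A.Indep (insert A.last S) ↔ A.restrict.Indep S := by
  have hnS : A.last ∉ S := fun h => A.last_notMem_resE (hS h)
  refine ⟨fun h => ⟨hS, linearIndepOn_finset_iff.mpr fun a ha i hi => ?_⟩, fun h => ?_⟩
  · obtain ⟨b, hb⟩ := exists_sum_insert_last_eq_zero hnS ha
    have := h.eq_zero_of_sum_eq_zero hb i (Finset.mem_insert_of_mem hi)
    rwa [Function.update_of_ne (ne_of_mem_of_not_mem hi hnS)] at this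
  refine indep_of_subset_of_forall_sum_eq_zero (Finset.insert_subset (A.last_mem hne)
    (hS.trans (A.resE_subset.trans (Finset.erase_subset _ _)))) fun a ha => ?_
  rw [Finset.sum_insert hnS] at ha
  have hS0 := h.eq_zero_of_sum_eq_zero (A.sum_smul_restrict_f_eq_zero_iff.mpr
    ⟨-a A.last, by rw [neg_smul (M := V →ₗ[ℝ] ℝ), neg_eq_iff_add_eq_zero, ha]⟩)
  rw [Finset.sum_eq_zero fun i hi => by rw [hS0 i hi, zero_smul], add_zero] at ha
  have hn0 := (smul_eq_zero.mp ha).resolve_right (A.nz _ (A.last_mem hne))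
  intro i hi
  rcases Finset.mem_insert.mp hi with rfl | hi
  exacts [hn0, hS0 i hi]

lemma erase_last_mem_nbc_restrict {S : Finset ℕ} (hS : S ∈ A.nbc) (hn : A.last ∈ S) :
    S.erase A.last ∈ A.restrict.nbc := by
  have hsub := erase_last_subset_resE_of_mem_nbc hS hn
  refine ⟨(indep_insert_last_iff ⟨_, hS.1.1 hn⟩ hsub).mp
    (by rw [Finset.insert_erase hn]; exact hS.1), ?_⟩
  rintro T ⟨C, hC, hCne, rfl⟩ hTS
  have hmC := C.min'_mem hCne
  have hCE : C ⊆ A.E.erase A.last := hC.1.trans A.resE_subset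
  have hnC : A.last ∉ C := fun h => A.last_notMem_resE (hC.1 h)
  obtain ⟨a, ha, ham⟩ := hC.exists_sum_eq_zero hmC
  obtain ⟨b, hb⟩ := exists_sum_insert_last_eq_zero hnC ha
  have hind := A.indep_of_subset_insert_of_mem_nbc (T := insert A.last C) (j := C.min' hCne) hS
    (Finset.insert_subset (hS.1.1 hn) (hCE.trans (Finset.erase_subset _ _))) ?_ ?_
  · have := hind.eq_zero_of_sum_eq_zero hb _ (Finset.mem_insert_of_mem hmC)
    exact ham (by rwa [Function.update_of_ne (ne_of_mem_of_not_mem hmC hnC)] at this)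
  · refine Finset.insert_subset (Finset.mem_insert_of_mem hn) fun x hx => ?_
    by_cases hxm : x = C.min' hCne
    · exact hxm ▸ Finset.mem_insert_self _ _
    · exact Finset.mem_insert_of_mem
        (Finset.mem_of_mem_erase (hTS (Finset.mem_erase.mpr ⟨hxm, hx⟩)))
  · intro x hx
    rcases Finset.mem_insert.mp hx with rfl | hx
    · exact A.le_last (Finset.mem_of_mem_erase (hCE hmC))
    · exact C.min'_le x hx

/-- Restrict the relation of `C` to `H_n`, then replace the minimum of `C` by its label. -/
lemma IsCircuit.exists_sum_restrict_f_eq_zero {C : Finset ℕ} (hC : A.IsCircuit C)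
    (hCne : C.Nonempty) (hpar : ∀ i ∈ A.E.erase A.last, A.restrict.f i ≠ 0) :
    ∃ k ∈ A.resE, (∀ x ∈ (C.erase A.last).erase (C.min' hCne), k < x) ∧ ∃ a : ℕ → ℝ,
      ∑ i ∈ insert k ((C.erase A.last).erase (C.min' hCne)), a i • A.restrict.f i = 0 ∧
      a k ≠ 0 := by
  set m := C.min' hCne
  set D := (C.erase A.last).erase m
  have hmC : m ∈ C := C.min'_mem hCne
  have hm : m ∈ A.E.erase A.last := Finset.mem_erase.mpr ⟨hC.min'_ne_last hCne, hC.1 hmC⟩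
  obtain ⟨a, ha, ham⟩ := hC.exists_sum_eq_zero hmC
  obtain ⟨k, hk, hkm, c, hc0, hc⟩ := A.exists_label hm (hpar m hm)
  have hkD : ∀ x ∈ D, k < x := fun x hx => hkm.trans_lt <| lt_of_le_of_ne
    (C.min'_le x (Finset.mem_of_mem_erase (Finset.mem_of_mem_erase hx)))
    (Finset.ne_of_mem_erase hx).symm
  have hkD' : k ∉ D := fun h => (hkD k h).false
  refine ⟨k, hk, hkD, Function.update a k (a m * c), ?_, by simpa using mul_ne_zero ham hc0⟩
  have hC0 : ∑ i ∈ C, a i • A.restrict.f i = 0 :=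
    A.sum_smul_restrict_f_eq_zero_iff.mpr ⟨0, by rw [zero_smul, ha]⟩
  have hn0 : A.restrict.f A.last = 0 := A.restrict_f_eq_zero_iff.mpr ⟨1, one_smul _ _⟩
  rw [← Finset.sum_erase _ (by rw [hn0, smul_zero]), ← Finset.add_sum_erase _ _
    (Finset.mem_erase.mpr ⟨hC.min'_ne_last hCne, hmC⟩), ← hc, smul_smul] at hC0
  rw [Finset.sum_insert hkD', Function.update_self, ← hC0]
  exact congrArg _ (Finset.sum_congr rfl fun i hi => by
    rw [Function.update_of_ne (ne_of_mem_of_not_mem hi hkD')])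

lemma insert_last_mem_nbc (hne : A.E.Nonempty)
    (hpar : ∀ i ∈ A.E.erase A.last, A.restrict.f i ≠ 0) {S : Finset ℕ}
    (hS : S ∈ A.restrict.nbc) : insert A.last S ∈ A.nbc := by
  refine ⟨(indep_insert_last_iff hne hS.1.1).mpr hS.1, ?_⟩
  rintro T ⟨C, hC, hCne, rfl⟩ hTS
  obtain ⟨k, hk, hkD, a, ha, hak⟩ := hC.exists_sum_restrict_f_eq_zero hCne hpar
  have hDS : (C.erase A.last).erase (C.min' hCne) ⊆ S := fun x hx => by
    obtain ⟨hxm, hxn, hxC⟩ : x ≠ C.min' hCne ∧ x ≠ A.last ∧ x ∈ C := by simpa using hx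
    exact (Finset.mem_insert.mp (hTS (Finset.mem_erase.mpr ⟨hxm, hxC⟩))).resolve_left hxn
  have hind := A.restrict.indep_of_subset_insert_of_mem_nbc (j := k) hS
    (Finset.insert_subset hk (hDS.trans hS.1.1)) (Finset.insert_subset_insert _ hDS)
    fun x hx => (Finset.mem_insert.mp hx).elim (fun h => h.ge) fun hx => (hkD x hx).le
  exact hak (hind.eq_zero_of_sum_eq_zero ha k (Finset.mem_insert_self _ _))

lemma bijOn_insert_last (hne : A.E.Nonempty)
    (hpar : ∀ i ∈ A.E.erase A.last, A.restrict.f i ≠ 0) :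
    Set.BijOn (insert A.last) A.restrict.nbc {S | S ∈ A.nbc ∧ A.last ∈ S} := by
  have hnS : ∀ S ∈ A.restrict.nbc, A.last ∉ S := fun S hS h => A.last_notMem_resE (hS.1.1 h)
  refine ⟨fun S hS => ⟨insert_last_mem_nbc hne hpar hS, Finset.mem_insert_self _ _⟩,
    fun S₁ h₁ S₂ h₂ h => ?_, fun S ⟨hS, hn⟩ =>
      ⟨S.erase A.last, erase_last_mem_nbc_restrict hS hn, Finset.insert_erase hn⟩⟩
  rw [← Finset.erase_insert (hnS S₁ h₁), h, Finset.erase_insert (hnS S₂ h₂)]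

variable (A) in
noncomputable def signsAt (x : V) : ℕ → SignType :=
  restrictSigns A.E fun i => SignType.sign (A.f i x)

lemma signsAt_of_mem {x : V} {i : ℕ} (hi : i ∈ A.E) :
    A.signsAt x i = SignType.sign (A.f i x) :=
  restrictSigns_of_mem hi

lemma isChamber_signsAt {x : V} (hx : ∀ i ∈ A.E, A.f i x ≠ 0) : A.IsChamber (A.signsAt x) :=
  ⟨fun i hi => by rw [signsAt_of_mem hi, sign_ne_zero]; exact hx i hi,
    fun _ hi => restrictSigns_of_notMem hi,
    x, fun i hi => by rw [signsAt_of_mem hi, sgn_eq_sign]⟩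

lemma restrictSigns_signsAt {S : Finset ℕ} (hS : S ⊆ A.E) {D : ℕ → SignType}
    (hD : ∀ i ∉ S, D i = 0) {y : V} (hy : ∀ i ∈ S, SignType.sign (A.f i y) = D i) :
    restrictSigns S (A.signsAt y) = D := by
  rw [← restrictSigns_eq_self hD, restrictSigns_eq_restrictSigns_iff]
  exact fun i hi => (signsAt_of_mem (hS hi)).trans (hy i hi)

lemma apply_eq_mul_of_smul_restrict_f_eq {i k : ℕ} {c : ℝ}
    (hc : c • A.restrict.f k = A.restrict.f i) {x : V} (hx : A.f A.last x = 0) :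
    A.f i x = c * A.f k x := by
  simpa using congr($hc ⟨x, hx⟩).symm

lemma exists_push_off_last (hne : A.E.Nonempty) {x : V} (hx0 : A.f A.last x = 0)
    (hx : ∀ i ∈ A.E.erase A.last, A.f i x ≠ 0) {s : SignType} (hs : s ≠ 0) :
    ∃ y, (∀ i ∈ A.E, A.f i y ≠ 0) ∧ SignType.sign (A.f A.last y) = s ∧
      ∀ i ∈ A.E.erase A.last, SignType.sign (A.f i y) = SignType.sign (A.f i x) := by
  obtain ⟨v, hv⟩ := exists_sign_eq (A.nz _ (A.last_mem hne)) hs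
  obtain ⟨δ, hδ, hδx⟩ := exists_pos_sign_add_smul_eq _ A.f hx v
  have hyn : SignType.sign (A.f A.last (x + δ • v)) = s := by
    simp [hx0, sign_mul, sign_pos hδ, hv]
  refine ⟨x + δ • v, fun i hi => ?_, hyn, hδx⟩
  by_cases hin : i = A.last
  · subst hin
    exact sign_ne_zero.mp (hyn ▸ hs)
  · have hi' := Finset.mem_erase.mpr ⟨hin, hi⟩
    exact sign_ne_zero.mp ((hδx i hi').symm ▸ sign_ne_zero.mpr (hx i hi'))

lemma IsChamber.restrictSigns_delete {C : ℕ → SignType} (hC : A.IsChamber C) :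
    A.delete.IsChamber (restrictSigns (A.E.erase A.last) C) := by
  obtain ⟨h0, -, x, hx⟩ := hC
  exact ⟨fun i (hi : i ∈ A.E.erase A.last) => by
      rw [restrictSigns_of_mem hi]; exact h0 i (Finset.mem_of_mem_erase hi),
    fun _ hi => restrictSigns_of_notMem hi,
    x, fun i (hi : i ∈ A.E.erase A.last) => by
      rw [restrictSigns_of_mem hi]; exact hx i (Finset.mem_of_mem_erase hi)⟩

lemma IsChamber.restrict_f_ne_zero {C : ℕ → SignType} (hC : A.IsChamber C)
    (hup : A.upperCond B C) : ∀ i ∈ A.E.erase A.last, A.restrict.f i ≠ 0 := by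
  obtain ⟨-, x, hx0, hx⟩ := hup
  intro i hi h0
  obtain ⟨c, hc⟩ := A.restrict_f_eq_zero_iff.mp h0
  refine hC.1 i (Finset.mem_of_mem_erase hi) ?_
  rw [← hx i hi, ← hc, LinearMap.smul_apply, hx0, smul_zero, sgn_eq_sign, sign_zero]

lemma IsChamber.restrictSigns_restrict {C : ℕ → SignType} (hC : A.IsChamber C)
    (hup : A.upperCond B C) : A.restrict.IsChamber (restrictSigns A.resE C) := by
  obtain ⟨-, x, hx0, hx⟩ := hup
  exact ⟨fun i (hi : i ∈ A.resE) => by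
      rw [restrictSigns_of_mem hi]; exact hC.1 i (Finset.mem_of_mem_erase (A.resE_subset hi)),
    fun _ hi => restrictSigns_of_notMem hi,
    ⟨x, LinearMap.mem_ker.mpr hx0⟩, fun i (hi : i ∈ A.resE) => by
      rw [restrictSigns_of_mem hi]; exact hx i (A.resE_subset hi)⟩

lemma IsChamber.exists_wall_point_last {C₁ C₂ : ℕ → SignType} (h₁ : A.IsChamber C₁)
    (h₂ : A.IsChamber C₂) (hn : A.last ∈ A.E) (heq : ∀ i ∈ A.E.erase A.last, C₁ i = C₂ i)
    (hne : C₁ A.last ≠ C₂ A.last) :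
    ∃ x, A.f A.last x = 0 ∧ ∀ i ∈ A.E.erase A.last, sgn (A.f i x) = C₁ i := by
  obtain ⟨h₁0, -, x₁, hx₁⟩ := h₁
  obtain ⟨h₂0, -, x₂, hx₂⟩ := h₂
  simp only [sgn_eq_sign] at hx₁ hx₂ ⊢
  have hprod : A.f A.last x₁ * A.f A.last x₂ < 0 := by
    rw [← sign_eq_neg_one_iff, sign_mul, hx₁ _ hn, hx₂ _ hn]
    exact SignType.mul_eq_neg_one_of_ne (h₁0 _ hn) (h₂0 _ hn) hne
  obtain ⟨x, hx0, hx⟩ := exists_wall_point (A.f A.last) hprod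
  refine ⟨x, hx0, fun i hi => ?_⟩
  have hiE := Finset.mem_of_mem_erase hi
  rw [hx (A.f i) (by rw [hx₁ i hiE, hx₂ i hiE, heq i hi]), hx₁ i hiE]

lemma injOn_restrictSigns_lower :
    Set.InjOn (restrictSigns (A.E.erase A.last)) {C | A.IsChamber C ∧ ¬ A.upperCond B C} := by
  rintro C₁ ⟨h₁, hu₁⟩ C₂ ⟨h₂, hu₂⟩ h
  have heq := restrictSigns_eq_restrictSigns_iff.mp h
  funext i
  by_cases hiE : i ∈ A.E
  swap
  · rw [h₁.2.1 i hiE, h₂.2.1 i hiE]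
  by_cases hi : i ∈ A.E.erase A.last
  · exact heq i hi
  obtain rfl : i = A.last := by simpa [hiE] using hi
  by_contra hne
  obtain ⟨x, hx0, hx⟩ := h₁.exists_wall_point_last h₂ hiE heq hne
  by_cases hB₁ : C₁ A.last = B A.last
  · exact hu₂ ⟨fun h => hne (hB₁.trans h.symm), x, hx0, fun j hj => (hx j hj).trans (heq j hj)⟩
  · exact hu₁ ⟨hB₁, x, hx0, hx⟩

lemma surjOn_restrictSigns_lower (hne : A.E.Nonempty) (hB : B A.last ≠ 0) :
    Set.SurjOn (restrictSigns (A.E.erase A.last)) {C | A.IsChamber C ∧ ¬ A.upperCond B C}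
      {D | A.delete.IsChamber D} := by
  rintro D ⟨hD0, hDsupp, x₀, hx₀⟩
  have hsub : A.E.erase A.last ⊆ A.E := Finset.erase_subset _ _
  -- a chamber of `A'` cut by `H_n` is lifted to its half on the side of `B`
  by_cases hcut : ∃ x, A.f A.last x = 0 ∧ ∀ i ∈ A.E.erase A.last, sgn (A.f i x) = D i
  · obtain ⟨x, hx0, hx⟩ := hcut
    simp only [sgn_eq_sign] at hx
    obtain ⟨y, hy0, hyn, hy⟩ := exists_push_off_last hne hx0
      (fun i hi => sign_ne_zero.mp ((hx i hi).symm ▸ hD0 i hi)) hB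
    refine ⟨A.signsAt y, ⟨isChamber_signsAt hy0, fun hu => hu.1 ?_⟩,
      restrictSigns_signsAt hsub hDsupp fun i hi => (hy i hi).trans (hx i hi)⟩
    rw [signsAt_of_mem (A.last_mem hne), hyn]
  · have hx₀n : A.f A.last x₀ ≠ 0 := fun h0 => hcut ⟨x₀, h0, hx₀⟩
    simp only [sgn_eq_sign] at hx₀
    refine ⟨A.signsAt x₀, ⟨isChamber_signsAt fun i hi => ?_, fun hu => ?_⟩,
      restrictSigns_signsAt hsub hDsupp hx₀⟩
    · by_cases hin : i = A.last
      · exact hin ▸ hx₀n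
      · have hi' := Finset.mem_erase.mpr ⟨hin, hi⟩
        exact sign_ne_zero.mp ((hx₀ i hi').symm ▸ hD0 i hi')
    · obtain ⟨-, x, hx0, hx⟩ := hu
      refine hcut ⟨x, hx0, fun i hi => ?_⟩
      rw [hx i hi, signsAt_of_mem (hsub hi)]
      exact hx₀ i hi

lemma bijOn_restrictSigns_lower (hne : A.E.Nonempty) (hB : B A.last ≠ 0) :
    Set.BijOn (restrictSigns (A.E.erase A.last)) {C | A.IsChamber C ∧ ¬ A.upperCond B C}
      {D | A.delete.IsChamber D} :=
  ⟨fun _ hC => hC.1.restrictSigns_delete, injOn_restrictSigns_lower,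
    surjOn_restrictSigns_lower hne hB⟩

/-- On `H_n` each hyperplane of `A'` is a nonzero multiple of its label in `A''`. -/
lemma injOn_restrictSigns_upper (hB : B A.last ≠ 0) :
    Set.InjOn (restrictSigns A.resE) {C | A.IsChamber C ∧ A.upperCond B C} := by
  rintro C₁ ⟨h₁, hu₁⟩ C₂ ⟨h₂, hu₂⟩ h
  have heq := restrictSigns_eq_restrictSigns_iff.mp h
  have hpar := h₁.restrict_f_ne_zero hu₁
  obtain ⟨hB₁, x₁, hx₁0, hx₁⟩ := hu₁
  obtain ⟨hB₂, x₂, hx₂0, hx₂⟩ := hu₂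
  simp only [sgn_eq_sign] at hx₁ hx₂
  funext i
  by_cases hiE : i ∈ A.E
  swap
  · rw [h₁.2.1 i hiE, h₂.2.1 i hiE]
  by_cases hin : i = A.last
  · subst hin
    exact SignType.eq_of_ne_of_ne (h₁.1 _ hiE) (h₂.1 _ hiE) hB hB₁ hB₂
  have hi := Finset.mem_erase.mpr ⟨hin, hiE⟩
  obtain ⟨k, hk, -, c, -, hc⟩ := A.exists_label hi (hpar i hi)
  rw [← hx₁ i hi, ← hx₂ i hi, apply_eq_mul_of_smul_restrict_f_eq hc hx₁0,
    apply_eq_mul_of_smul_restrict_f_eq hc hx₂0, sign_mul, sign_mul,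
    hx₁ k (A.resE_subset hk), hx₂ k (A.resE_subset hk), heq k hk]

lemma surjOn_restrictSigns_upper (hne : A.E.Nonempty) (hB : B A.last ≠ 0)
    (hpar : ∀ i ∈ A.E.erase A.last, A.restrict.f i ≠ 0) :
    Set.SurjOn (restrictSigns A.resE) {C | A.IsChamber C ∧ A.upperCond B C}
      {D | A.restrict.IsChamber D} := by
  rintro D ⟨hD0, hDsupp, ⟨x, hx0⟩, hx⟩
  rw [LinearMap.mem_ker] at hx0
  simp only [sgn_eq_sign, restrict_f_apply] at hx
  have hxi : ∀ i ∈ A.E.erase A.last, A.f i x ≠ 0 := fun i hi => by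
    obtain ⟨k, hk, -, c, hc0, hc⟩ := A.exists_label hi (hpar i hi)
    rw [apply_eq_mul_of_smul_restrict_f_eq hc hx0]
    exact mul_ne_zero hc0 (sign_ne_zero.mp ((hx k hk).symm ▸ hD0 k hk))
  obtain ⟨y, hy0, hyn, hy⟩ := exists_push_off_last hne hx0 hxi (s := -B A.last) (by simpa using hB)
  refine ⟨A.signsAt y, ⟨isChamber_signsAt hy0, ?_, x, hx0, fun i hi => ?_⟩,
    restrictSigns_signsAt (A.resE_subset.trans (Finset.erase_subset _ _)) hDsupp
      fun i hi => (hy i (A.resE_subset hi)).trans (hx i hi)⟩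
  · rw [signsAt_of_mem (A.last_mem hne), hyn]
    exact SignType.neg_ne_self hB
  · rw [sgn_eq_sign, signsAt_of_mem (Finset.mem_of_mem_erase hi), hy i hi]

lemma bijOn_restrictSigns_upper (hne : A.E.Nonempty) (hB : B A.last ≠ 0)
    (hpar : ∀ i ∈ A.E.erase A.last, A.restrict.f i ≠ 0) :
    Set.BijOn (restrictSigns A.resE) {C | A.IsChamber C ∧ A.upperCond B C}
      {D | A.restrict.IsChamber D} :=
  ⟨fun _ hC => hC.1.restrictSigns_restrict hC.2, injOn_restrictSigns_upper hB,
    surjOn_restrictSigns_upper hne hB hpar⟩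

lemma bijOn_of_E_eq_empty (hE : A.E = ∅) {η : (ℕ → SignType) → Finset ℕ}
    (hη : ∀ C, η C = ∅) : Set.BijOn η {C | A.IsChamber C} A.nbc := by
  have hch : {C | A.IsChamber C} = {0} := Set.eq_singleton_iff_unique_mem.mpr
    ⟨⟨by simp [hE], fun _ _ => rfl, 0, by simp [hE]⟩,
      fun C hC => funext fun i => hC.2.1 i (by simp [hE])⟩
  have hnbc : A.nbc = {∅} := Set.eq_singleton_iff_unique_mem.mpr
    ⟨⟨A.indep_empty, fun T ⟨C, hC, hCne, _⟩ _ => by simpa [hE] using hC.1 hCne.choose_spec⟩,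
      fun S hS => Finset.subset_empty.mp (hE ▸ hS.1.1)⟩
  rw [hch, hnbc]
  exact ⟨fun C _ => hη C, Set.injOn_singleton _ _, fun S hS => ⟨0, rfl, (hη 0).trans hS.symm⟩⟩

lemma bijOn_lower (hne : A.E.Nonempty) (hB : B A.last ≠ 0) {η η' : (ℕ → SignType) → Finset ℕ}
    (h' : Set.BijOn η' {D | A.delete.IsChamber D} A.delete.nbc)
    (hlow : ∀ C, A.IsChamber C → ¬ A.upperCond B C →
      η C = η' (restrictSigns (A.E.erase A.last) C)) :
    Set.BijOn η {C | A.IsChamber C ∧ ¬ A.upperCond B C} {S | S ∈ A.nbc ∧ A.last ∉ S} := by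
  rw [← nbc_delete]
  exact (h'.comp (bijOn_restrictSigns_lower hne hB)).congr fun C hC => (hlow C hC.1 hC.2).symm

lemma bijOn_upper (hne : A.E.Nonempty) (hB : B A.last ≠ 0) {η η'' : (ℕ → SignType) → Finset ℕ}
    (h'' : Set.BijOn η'' {D | A.restrict.IsChamber D} A.restrict.nbc)
    (hup : ∀ C, A.IsChamber C → A.upperCond B C →
      η C = insert A.last (η'' (restrictSigns A.resE C))) :
    Set.BijOn η {C | A.IsChamber C ∧ A.upperCond B C} {S | S ∈ A.nbc ∧ A.last ∈ S} := by
  by_cases hpar : ∀ i ∈ A.E.erase A.last, A.restrict.f i ≠ 0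
  · exact ((bijOn_insert_last hne hpar).comp
      (h''.comp (bijOn_restrictSigns_upper hne hB hpar))).congr fun C hC => (hup C hC.1 hC.2).symm
  push Not at hpar
  obtain ⟨i, hi, h0⟩ := hpar
  convert Set.bijOn_empty η
  · exact Set.eq_empty_iff_forall_notMem.mpr fun C hC => hC.1.restrict_f_ne_zero hC.2 i hi h0
  · exact Set.eq_empty_iff_forall_notMem.mpr fun S hS => last_notMem_of_mem_nbc hi h0 hS.1 hS.2

end NArr

theorem IsJO.bijOn {A : NArr V} {B : ℕ → SignType} {η : (ℕ → SignType) → Finset ℕ}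
    (hη : IsJO V A B η) (hB : ∀ i ∈ A.E, B i ≠ 0) :
    Set.BijOn η {C | A.IsChamber C} A.nbc := by
  induction hη with
  | base A B η hE hη => exact A.bijOn_of_E_eq_empty hE hη
  | step A B η η' η'' hne _ _ hlow hup ih' ih'' =>
    have h' := ih' fun i (hi : i ∈ A.E.erase A.last) => by
      rw [restrictSigns_of_mem hi]; exact hB i (Finset.mem_of_mem_erase hi)
    have h'' := ih'' fun i (hi : i ∈ A.resE) => by
      rw [restrictSigns_of_mem hi]; exact hB i (Finset.mem_of_mem_erase (A.resE_subset hi))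
    have hch : {C | A.IsChamber C} = {C | A.IsChamber C ∧ ¬ A.upperCond B C} ∪
        {C | A.IsChamber C ∧ A.upperCond B C} := by
      ext; simp only [Set.mem_union, Set.mem_ofPred_eq]; tauto
    have hnbc : A.nbc = {S | S ∈ A.nbc ∧ A.last ∉ S} ∪ {S | S ∈ A.nbc ∧ A.last ∈ S} := by
      ext; simp only [Set.mem_union, Set.mem_ofPred_eq]; tauto
    have hBn : B A.last ≠ 0 := hB _ (A.last_mem hne)
    rw [hch, hnbc]
    exact (NArr.bijOn_lower hne hBn h' hlow).union_of_disjoint (NArr.bijOn_upper hne hBn h'' hup)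
      (Set.disjoint_left.mpr fun S hS hS' => hS.2 hS'.2)

theorem IsJO.apply_eq_empty {A : NArr V} {B : ℕ → SignType} {η : (ℕ → SignType) → Finset ℕ}
    (hη : IsJO V A B η) (hB : A.IsChamber B) : η B = ∅ := by
  induction hη with
  | base _ _ _ _ hη => exact hη _
  | step A B _ _ _ _ _ _ hlow _ ih' _ =>
    rw [hlow B hB fun h => h.1 rfl]
    exact ih' hB.restrictSigns_delete

theorem jewell_orlik_bijection_general (A : NArr V) (B : ℕ → SignType)
    (hB : A.IsChamber B)
    (η : (ℕ → SignType) → Finset ℕ) (hη : IsJO V A B η) :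
    Set.BijOn η {C | A.IsChamber C} A.nbc ∧ η B = ∅ :=
  ⟨hη.bijOn hB.1, hη.apply_eq_empty hB⟩

/-- Jewell–Orlik bijection: if the ordering of the hyperplanes of `A` satisfies the cut
property with respect to the base chamber `B`, then the recursively defined map `η`
restricts to a bijection from the chambers of `A` onto the no-broken-circuit sets of
`A`, with `η(B) = ∅`. -/
theorem jewell_orlik_bijection (A : NArr V) (B : ℕ → SignType)
    (hB : A.IsChamber B) (hcut : A.CutProp B)
    (η : (ℕ → SignType) → Finset ℕ) (hη : IsJO V A B η) :
    Set.BijOn η {C | A.IsChamber C} A.nbc ∧ η B = ∅ :=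
  jewell_orlik_bijection_general A B hB η hη
end
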